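/- Let 𝔐 be a class of preference models and ★ a dynamic operator closed over 𝔐. The schemata (1) [★φ][≤]ξ → (φ → [≤](φ → [★φ]ξ)), (2) [★φ][<]ξ → (φ → [<](φ → [★φ]ξ)), (3) [≤][★φ]ξ → (φ → [★φ][≤](φ → ξ)), (4) [<][★φ]ξ → (φ → [★φ][<](φ → ξ)) are valid in ⟨𝔐, ★⟩ for all φ ∈ L_0 and ξ ∈ L_≤(★) if and only if ★ is 𝔐-DP1-compliant. -/

import Mathlib

inductive PForm (P : Type) : Type
  | atom : P → PForm P
  | neg  : PForm P → PForm P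
  | and  : PForm P → PForm P → PForm P

inductive DForm (P : Type) : Type
  | atom  : P → DForm P
  | neg   : DForm P → DForm P
  | and   : DForm P → DForm P → DForm P
  | all   : DForm P → DForm P
  | boxLe : DForm P → DForm P
  | boxLt : DForm P → DForm P
  | dyn   : PForm P → DForm P → DForm P

structure PrefModel (P : Type) where
  W : Type
  le : W → W → Prop
  refl : ∀ w, le w w
  trans : ∀ w₁ w₂ w₃, le w₁ w₂ → le w₂ w₃ → le w₁ w₃
  wf : WellFounded (fun w w' => le w w' ∧ ¬ le w' w)
  val : P → Set W

namespace PrefModel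
variable {P : Type}
def lt (M : PrefModel P) (w w' : M.W) : Prop := M.le w w' ∧ ¬ M.le w' w
def Min (M : PrefModel P) (S : Set M.W) : Set M.W :=
  {w | w ∈ S ∧ ¬ ∃ w' ∈ S, M.le w' w ∧ ¬ M.le w w'}
end PrefModel

def psat {P : Type} (M : PrefModel P) : PForm P → M.W → Prop
  | .atom p, w => w ∈ M.val p
  | .neg φ, w => ¬ psat M φ w
  | .and φ ψ, w => psat M φ w ∧ psat M ψ w

def pext {P : Type} (M : PrefModel P) (φ : PForm P) : Set M.W := {w | psat M φ w}

structure DynOp (P : Type) where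
  rel : (M : PrefModel P) → PForm P → M.W → M.W → Prop
  refl : ∀ M φ w, rel M φ w w
  trans : ∀ M φ w₁ w₂ w₃, rel M φ w₁ w₂ → rel M φ w₂ w₃ → rel M φ w₁ w₃
  wf : ∀ M φ, WellFounded (fun w w' => rel M φ w w' ∧ ¬ rel M φ w' w)

def DynOp.apply {P : Type} (s : DynOp P) (M : PrefModel P) (φ : PForm P) : PrefModel P where
  W := M.W
  le := s.rel M φ
  refl := s.refl M φ
  trans := s.trans M φ
  wf := s.wf M φ
  val := M.val

def DynOp.srel {P : Type} (s : DynOp P) (M : PrefModel P) (φ : PForm P) (w w' : M.W) : Prop :=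
  s.rel M φ w w' ∧ ¬ s.rel M φ w' w

def PForm.toD {P : Type} : PForm P → DForm P
  | .atom p => .atom p
  | .neg φ => .neg φ.toD
  | .and φ ψ => .and φ.toD ψ.toD

namespace DForm
variable {P : Type}
def imp (ξ ψ : DForm P) : DForm P := .neg (.and ξ (.neg ψ))
def iff (ξ ψ : DForm P) : DForm P := .and (imp ξ ψ) (imp ψ ξ)
def or (ξ ψ : DForm P) : DForm P := .neg (.and (.neg ξ) (.neg ψ))
def exi (ξ : DForm P) : DForm P := .neg (.all (.neg ξ))
def diaLt (ξ : DForm P) : DForm P := .neg (.boxLt (.neg ξ))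
def mu (ξ : DForm P) : DForm P := .and ξ (.neg (diaLt ξ))
def bel (ψ χ : DForm P) : DForm P := .all (imp (mu χ) ψ)
end DForm

def dsat {P : Type} (s : DynOp P) : DForm P → (M : PrefModel P) → M.W → Prop
  | .atom p, M, w => w ∈ M.val p
  | .neg ξ, M, w => ¬ dsat s ξ M w
  | .and ξ₁ ξ₂, M, w => dsat s ξ₁ M w ∧ dsat s ξ₂ M w
  | .all ξ, M, _ => ∀ w', dsat s ξ M w'
  | .boxLe ξ, M, w => ∀ w', M.le w' w → dsat s ξ M w'
  | .boxLt ξ, M, w => ∀ w', M.lt w' w → dsat s ξ M w'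
  | .dyn φ ξ, M, w => dsat s ξ (s.apply M φ) w

def ClosedOver {P : Type} (s : DynOp P) (𝔐 : Set (PrefModel P)) : Prop :=
  ∀ M ∈ 𝔐, ∀ φ : PForm P, s.apply M φ ∈ 𝔐

/-- `★` is `𝔐`-DP1-compliant. -/
def DP1Compliant {P : Type} (s : DynOp P) (𝔐 : Set (PrefModel P)) : Prop :=
  ∀ M ∈ 𝔐, ∀ (φ : PForm P) (w w' : M.W), psat M φ w → psat M φ w' →
    -- (DP1a), non-strict and strict versions
    ((s.rel M φ w w' → ∀ ξ : DForm P, dsat s (.dyn φ ξ) M w →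
        ∃ w'' : M.W, psat M φ w'' ∧ dsat s (.dyn φ ξ) M w'' ∧ M.le w'' w') ∧
     (s.srel M φ w w' → ∀ ξ : DForm P, dsat s (.dyn φ ξ) M w →
        ∃ w'' : M.W, psat M φ w'' ∧ dsat s (.dyn φ ξ) M w'' ∧ M.lt w'' w') ∧
    -- (DP1b), non-strict and strict versions
     (M.le w w' → ∀ ξ : DForm P, dsat s (.dyn φ ξ) M w →
        ∃ w'' : M.W, psat M φ w'' ∧ dsat s (.dyn φ ξ) M w'' ∧ s.rel M φ w'' w') ∧
     (M.lt w w' → ∀ ξ : DForm P, dsat s (.dyn φ ξ) M w →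
        ∃ w'' : M.W, psat M φ w'' ∧ dsat s (.dyn φ ξ) M w'' ∧ s.srel M φ w'' w'))

/-!
Schemata (1), (2) and clauses DP1b, and schemata (3), (4) and clauses DP1a, are the box and the
diamond reading of one transfer condition between a relation `R` and a relation `S` on the
`φ`-worlds (`R, S` being `≤` and `≤_★φ`, or `<` and `<_★φ`, in one order or the other). The box
reading for the truth set of `[★φ]ξ` follows from the diamond reading for the truth set of
`[★φ]¬(φ ∧ ξ)`, and conversely; as these truth sets range over the same family, validity of the
schemata for all `ξ` is equivalent to DP1-compliance.
-/

section Transfer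

variable {W : Type*} (R S : W → W → Prop) (Φ A : Set W)

def BoxTransfer : Prop :=
  ∀ w, (∀ v, R v w → v ∈ A) → w ∈ Φ → ∀ u, S u w → u ∈ Φ → u ∈ A

def DiamondTransfer : Prop :=
  ∀ u w, u ∈ Φ → w ∈ Φ → S u w → u ∈ A → ∃ v ∈ Φ, v ∈ A ∧ R v w

variable {R S Φ A}

theorem BoxTransfer.of_diamondTransfer_compl (h : DiamondTransfer R S Φ (Φ ∩ A)ᶜ) :
    BoxTransfer R S Φ A := by
  intro w hbox hw u huw hu
  by_contra huA
  obtain ⟨v, hv, hvA, hvw⟩ := h u w hu hw huw fun hu' => huA hu'.2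
  exact hvA ⟨hv, hbox v hvw⟩

theorem DiamondTransfer.of_boxTransfer_compl (h : BoxTransfer R S Φ (Φ ∩ A)ᶜ) :
    DiamondTransfer R S Φ A := by
  intro u w hu hw huw huA
  by_contra hnone
  exact h w (fun v hvw hvA => hnone ⟨v, hvA.1, hvA.2, hvw⟩) hw u huw hu ⟨hu, huA⟩

theorem forall_boxTransfer_iff_forall_diamondTransfer {F : Type*} (A : F → Set W) (g : F → F)
    (hg : ∀ ξ, A (g ξ) = (Φ ∩ A ξ)ᶜ) :
    (∀ ξ, BoxTransfer R S Φ (A ξ)) ↔ ∀ ξ, DiamondTransfer R S Φ (A ξ) :=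
  ⟨fun h ξ => .of_boxTransfer_compl (hg ξ ▸ h (g ξ)),
    fun h ξ => .of_diamondTransfer_compl (hg ξ ▸ h (g ξ))⟩

end Transfer

section Semantics

variable {P : Type} (s : DynOp P)

-- `w` is typed in the updated model so that `simp` can rewrite under its binders.
theorem psat_apply (M : PrefModel P) (φ ψ : PForm P) (w : (s.apply M φ).W) :
    psat (s.apply M φ) ψ w ↔ psat M ψ w := by
  induction ψ with
  | atom p => rfl
  | neg χ ih => simp only [psat, ih]
  | and χ₁ χ₂ ih₁ ih₂ => simp only [psat, ih₁, ih₂]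

theorem dsat_toD (ψ : PForm P) (M : PrefModel P) (w : M.W) :
    dsat s ψ.toD M w ↔ psat M ψ w := by
  induction ψ with
  | atom p => rfl
  | neg χ ih => simp only [PForm.toD, dsat, psat, ih]
  | and χ₁ χ₂ ih₁ ih₂ => simp only [PForm.toD, dsat, psat, ih₁, ih₂]

theorem dsat_imp (ξ ψ : DForm P) (M : PrefModel P) (w : M.W) :
    dsat s (ξ.imp ψ) M w ↔ (dsat s ξ M w → dsat s ψ M w) := by
  simp only [DForm.imp, dsat, not_and, not_not]

end Semantics

section Schemata

variable {P : Type} (s : DynOp P)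

def dext (M : PrefModel P) (φ : PForm P) (ξ : DForm P) : Set M.W :=
  {w | dsat s (.dyn φ ξ) M w}

theorem dext_neg_and (M : PrefModel P) (φ : PForm P) (ξ : DForm P) :
    dext s M φ (.neg (.and φ.toD ξ)) = (pext M φ ∩ dext s M φ ξ)ᶜ := by
  ext w
  exact not_congr <| and_congr_left' <|
    (dsat_toD s φ (s.apply M φ) w).trans (psat_apply s M φ φ w)

theorem forall_dsat_schemata_iff (M : PrefModel P) (φ : PForm P) (ξ : DForm P) :
    (∀ w : M.W,
      dsat s ((DForm.dyn φ (.boxLe ξ)).imp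
        (φ.toD.imp (.boxLe (φ.toD.imp (.dyn φ ξ))))) M w ∧
      dsat s ((DForm.dyn φ (.boxLt ξ)).imp
        (φ.toD.imp (.boxLt (φ.toD.imp (.dyn φ ξ))))) M w ∧
      dsat s ((DForm.boxLe (.dyn φ ξ)).imp
        (φ.toD.imp (.dyn φ (.boxLe (φ.toD.imp ξ))))) M w ∧
      dsat s ((DForm.boxLt (.dyn φ ξ)).imp
        (φ.toD.imp (.dyn φ (.boxLt (φ.toD.imp ξ))))) M w) ↔
    BoxTransfer (s.rel M φ) M.le (pext M φ) (dext s M φ ξ) ∧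
      BoxTransfer (s.srel M φ) M.lt (pext M φ) (dext s M φ ξ) ∧
      BoxTransfer M.le (s.rel M φ) (pext M φ) (dext s M φ ξ) ∧
      BoxTransfer M.lt (s.srel M φ) (pext M φ) (dext s M φ ξ) := by
  simp only [forall_and, dsat_imp, dsat, dsat_toD, psat_apply]
  rfl

theorem dp1Compliant_iff_diamondTransfer (𝔐 : Set (PrefModel P)) :
    DP1Compliant s 𝔐 ↔ ∀ M ∈ 𝔐, ∀ (φ : PForm P) (ξ : DForm P),
      DiamondTransfer (s.rel M φ) M.le (pext M φ) (dext s M φ ξ) ∧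
        DiamondTransfer (s.srel M φ) M.lt (pext M φ) (dext s M φ ξ) ∧
        DiamondTransfer M.le (s.rel M φ) (pext M φ) (dext s M φ ξ) ∧
        DiamondTransfer M.lt (s.srel M φ) (pext M φ) (dext s M φ ξ) := by
  refine ⟨fun h M hM φ ξ => ?_, fun h M hM φ u w hu hw => ?_⟩
  · refine ⟨?_, ?_, ?_, ?_⟩ <;> intro u w hu hw huw
    exacts [(h M hM φ u w hu hw).2.2.1 huw ξ, (h M hM φ u w hu hw).2.2.2 huw ξ,
      (h M hM φ u w hu hw).1 huw ξ, (h M hM φ u w hu hw).2.1 huw ξ]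
  · refine ⟨?_, ?_, ?_, ?_⟩ <;> intro huw ξ
    exacts [(h M hM φ ξ).2.2.1 u w hu hw huw, (h M hM φ ξ).2.2.2 u w hu hw huw,
      (h M hM φ ξ).1 u w hu hw huw, (h M hM φ ξ).2.1 u w hu hw huw]

theorem forall_boxTransfers_iff_forall_diamondTransfers (M : PrefModel P) (φ : PForm P) :
    (∀ ξ, BoxTransfer (s.rel M φ) M.le (pext M φ) (dext s M φ ξ) ∧
      BoxTransfer (s.srel M φ) M.lt (pext M φ) (dext s M φ ξ) ∧
      BoxTransfer M.le (s.rel M φ) (pext M φ) (dext s M φ ξ) ∧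
      BoxTransfer M.lt (s.srel M φ) (pext M φ) (dext s M φ ξ)) ↔
    ∀ ξ, DiamondTransfer (s.rel M φ) M.le (pext M φ) (dext s M φ ξ) ∧
      DiamondTransfer (s.srel M φ) M.lt (pext M φ) (dext s M φ ξ) ∧
      DiamondTransfer M.le (s.rel M φ) (pext M φ) (dext s M φ ξ) ∧
      DiamondTransfer M.lt (s.srel M φ) (pext M φ) (dext s M φ ξ) := by
  have hg := dext_neg_and s M φ
  simp only [forall_and, forall_boxTransfer_iff_forall_diamondTransfer _ _ hg]

end Schemata

theorem dp1_compliance_characterisation_general {P : Type}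
    (𝔐 : Set (PrefModel P)) (s : DynOp P) :
    (∀ (φ : PForm P) (ξ : DForm P), ∀ M ∈ 𝔐, ∀ w : M.W,
      dsat s ((DForm.dyn φ (.boxLe ξ)).imp
        (φ.toD.imp (.boxLe (φ.toD.imp (.dyn φ ξ))))) M w ∧
      dsat s ((DForm.dyn φ (.boxLt ξ)).imp
        (φ.toD.imp (.boxLt (φ.toD.imp (.dyn φ ξ))))) M w ∧
      dsat s ((DForm.boxLe (.dyn φ ξ)).imp
        (φ.toD.imp (.dyn φ (.boxLe (φ.toD.imp ξ))))) M w ∧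
      dsat s ((DForm.boxLt (.dyn φ ξ)).imp
        (φ.toD.imp (.dyn φ (.boxLt (φ.toD.imp ξ))))) M w) ↔ DP1Compliant s 𝔐 := by
  simp only [forall_dsat_schemata_iff, dp1Compliant_iff_diamondTransfer]
  calc _ ↔ ∀ M ∈ 𝔐, ∀ (φ : PForm P) (ξ : DForm P), _ :=
        ⟨fun h M hM φ ξ => h φ ξ M hM, fun h φ ξ M hM => h M hM φ ξ⟩
    _ ↔ _ := forall₂_congr fun M _ =>
        forall_congr' (forall_boxTransfers_iff_forall_diamondTransfers s M)

theorem dp1_compliance_characterisation {P : Type}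
    (𝔐 : Set (PrefModel P)) (s : DynOp P) (hclosed : ClosedOver s 𝔐) :
    (∀ (φ : PForm P) (ξ : DForm P), ∀ M ∈ 𝔐, ∀ w : M.W,
      dsat s ((DForm.dyn φ (.boxLe ξ)).imp
        (φ.toD.imp (.boxLe (φ.toD.imp (.dyn φ ξ))))) M w ∧
      dsat s ((DForm.dyn φ (.boxLt ξ)).imp
        (φ.toD.imp (.boxLt (φ.toD.imp (.dyn φ ξ))))) M w ∧
      dsat s ((DForm.boxLe (.dyn φ ξ)).imp
        (φ.toD.imp (.dyn φ (.boxLe (φ.toD.imp ξ))))) M w ∧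
      dsat s ((DForm.boxLt (.dyn φ ξ)).imp
        (φ.toD.imp (.dyn φ (.boxLt (φ.toD.imp ξ))))) M w) ↔ DP1Compliant s 𝔐 :=
  dp1_compliance_characterisation_general 𝔐 s
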